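/- In the setting of a (P2+P3, complement-of-(P2+P3))-free graph G with induced 5-cycle C on v1,...,v5, for every i in {1,...,5}, if V_{i,i+2} contains at least three vertices, then no vertex of V_{i-1,i+1} is adjacent to any vertex of V_{i+1,i+3}. -/

import Mathlib

/-- `G` contains no induced subgraph isomorphic to `H`. -/
def InducedFree {α V : Type*} (G : SimpleGraph V) (H : SimpleGraph α) : Prop :=
  ∀ f : α ↪ V, ¬ (∀ a b : α, H.Adj a b ↔ G.Adj (f a) (f b))

/-- `P₂ + P₃`: the disjoint union of a 2-vertex path and a 3-vertex path. -/
def P2PlusP3 : SimpleGraph (Fin 5) :=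
  SimpleGraph.fromRel fun a b => (a = 0 ∧ b = 1) ∨ (a = 2 ∧ b = 3) ∨ (a = 3 ∧ b = 4)

/-- `VS G v S`: the vertices outside the 5-cycle `v 0, …, v 4` whose
neighbourhood on the cycle is exactly `{v i : i ∈ S}`. -/
def VS {V : Type*} (G : SimpleGraph V) (v : ZMod 5 → V) (S : Set (ZMod 5)) : Set V :=
  {x | (∀ i, x ≠ v i) ∧ ∀ i, G.Adj x (v i) ↔ i ∈ S}

/-!
Rotate the cycle so that `i = 0` and put `A = V_{0,2}`. Every `a ∈ A` is non-adjacent to `x` or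
to `y`, since otherwise `a v₁` and `x v₀ y` induce `P₂ + P₃` in the complement. At most one
`a ∈ A` is non-adjacent to `x`: two such, `a` and `b`, induce `P₂ + P₃` as `a b` and `v₋₁ x v₁`
when adjacent, and as `x v₋₁` and `a v₂ b` when not. Symmetrically (with `v₃ y v₁`, resp. `y v₃`
and `a v₀ b`) at most one is non-adjacent to `y`, so `|A| ≤ 2`.
-/

namespace InducedFree

variable {V : Type*} {G : SimpleGraph V}

theorem false_of_P2PlusP3 (hG : InducedFree G P2PlusP3) {p q r s t : V}
    (hpq : G.Adj p q) (hrs : G.Adj r s) (hst : G.Adj s t) (hrt : ¬ G.Adj r t) (hne : r ≠ t)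
    (hpr : ¬ G.Adj p r) (hps : ¬ G.Adj p s) (hpt : ¬ G.Adj p t)
    (hqr : ¬ G.Adj q r) (hqs : ¬ G.Adj q s) (hqt : ¬ G.Adj q t) : False := by
  have hinj : Function.Injective ![p, q, r, s, t] := by
    have := hpq.ne; have := hrs.ne; have := hst.ne
    intro a b hab
    fin_cases a <;> fin_cases b <;> simp_all [G.adj_comm]
  refine hG ⟨![p, q, r, s, t], hinj⟩ fun a b => ?_
  fin_cases a <;> fin_cases b <;> simp [P2PlusP3, G.adj_comm, *]

theorem subsingleton_of_P2PlusP3 (hG : InducedFree G P2PlusP3) {x p q z : V}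
    (hxp : G.Adj x p) (hxq : G.Adj x q) (hpq : ¬ G.Adj p q) (hne : p ≠ q)
    (hxz : ¬ G.Adj x z) (hpz : ¬ G.Adj p z) :
    {a | G.Adj a z ∧ ¬ G.Adj a p ∧ ¬ G.Adj a q ∧ ¬ G.Adj a x}.Subsingleton := by
  rintro a ⟨haz, hap, haq, hax⟩ b ⟨hbz, hbp, hbq, hbx⟩
  by_contra hab
  by_cases hadj : G.Adj a b
  · exact hG.false_of_P2PlusP3 hadj hxp.symm hxq hpq hne hap hax haq hbp hbx hbq
  · exact hG.false_of_P2PlusP3 hxp haz hbz.symm hadj hab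
      (hax ∘ G.adj_symm) hxz (hbx ∘ G.adj_symm) (hap ∘ G.adj_symm) hpz (hbp ∘ G.adj_symm)

theorem not_adj_or_not_adj_of_compl_P2PlusP3 (hGc : InducedFree Gᶜ P2PlusP3) {x y z u a : V}
    (hxy : G.Adj x y) (hzx : ¬ G.Adj z x) (hzy : ¬ G.Adj z y)
    (hux : G.Adj u x) (huy : G.Adj u y) (huz : G.Adj u z)
    (haz : G.Adj a z) (hne : a ≠ u) (hau : ¬ G.Adj a u) : ¬ G.Adj a x ∨ ¬ G.Adj a y := by
  by_contra! ⟨hax, hay⟩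
  have hxz : x ≠ z := fun h => hzy (h ▸ hxy)
  refine hGc.false_of_P2PlusP3 (p := a) (q := u) (r := x) (s := z) (t := y)
    ⟨hne, hau⟩ ⟨hxz, hzx ∘ G.adj_symm⟩ ⟨fun h => hzx (h ▸ hxy.symm), hzy⟩ ?_ hxy.ne
    ?_ ?_ ?_ ?_ ?_ ?_ <;> simp [*]

end InducedFree

section VS

variable {V : Type*} {G : SimpleGraph V} {v : ZMod 5 → V} {S : Set (ZMod 5)} {x : V} {j : ZMod 5}

theorem adj_of_mem_VS (hx : x ∈ VS G v S) (hj : j ∈ S) : G.Adj x (v j) :=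
  (hx.2 j).2 hj

theorem not_adj_of_mem_VS (hx : x ∈ VS G v S) (hj : j ∉ S) : ¬ G.Adj x (v j) :=
  fun h => hj ((hx.2 j).1 h)

theorem VS_image_add_left (i : ZMod 5) (S : Set (ZMod 5)) :
    VS G v ((i + ·) '' S) = VS G (fun k => v (i + k)) S := by
  ext x
  refine and_congr (Equiv.addLeft i).forall_congr_right.symm
    ((Equiv.addLeft i).forall_congr_right.symm.trans (forall_congr' fun k => ?_))
  simp only [Equiv.coe_addLeft, Set.image_add_left, Set.mem_preimage, neg_add_cancel_left]

theorem ncard_VS_le_two (hG : InducedFree G P2PlusP3) (hGc : InducedFree Gᶜ P2PlusP3)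
    (hC : ∀ i j : ZMod 5, G.Adj (v i) (v j) ↔ j = i + 1 ∨ j = i - 1) {x y : V}
    (hx : x ∈ VS G v {-1, 1}) (hy : y ∈ VS G v {1, 3}) (hxy : G.Adj x y) :
    (VS G v {0, 2}).ncard ≤ 2 := by
  have adj : ∀ j k : ZMod 5, (k = j + 1 ∨ k = j - 1) → G.Adj (v j) (v k) :=
    fun j k => (hC j k).2
  have nadj : ∀ j k : ZMod 5, ¬ (k = j + 1 ∨ k = j - 1) → ¬ G.Adj (v j) (v k) :=
    fun j k => (hC j k).not.2
  have hSx := hG.subsingleton_of_P2PlusP3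
    (adj_of_mem_VS hx (by decide)) (adj_of_mem_VS hx (by decide))
    (nadj (-1) 1 (by decide)) (fun h => nadj (-1) 2 (by decide) (h ▸ adj 1 2 (by decide)))
    (not_adj_of_mem_VS hx (by decide)) (nadj (-1) 2 (by decide))
  have hSy := hG.subsingleton_of_P2PlusP3
    (adj_of_mem_VS hy (by decide)) (adj_of_mem_VS hy (by decide))
    (nadj 3 1 (by decide)) (fun h => nadj 3 0 (by decide) (h ▸ adj 1 0 (by decide)))
    (not_adj_of_mem_VS hy (by decide)) (nadj 3 0 (by decide))
  have hsub : VS G v {0, 2} ⊆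
      {a | G.Adj a (v 2) ∧ ¬ G.Adj a (v (-1)) ∧ ¬ G.Adj a (v 1) ∧ ¬ G.Adj a x} ∪
      {a | G.Adj a (v 0) ∧ ¬ G.Adj a (v 3) ∧ ¬ G.Adj a (v 1) ∧ ¬ G.Adj a y} := by
    intro a ha
    have ha1 : ¬ G.Adj a (v 1) := not_adj_of_mem_VS ha (by decide)
    rcases hGc.not_adj_or_not_adj_of_compl_P2PlusP3 hxy
      (not_adj_of_mem_VS hx (by decide) ∘ G.adj_symm)
      (not_adj_of_mem_VS hy (by decide) ∘ G.adj_symm) (adj_of_mem_VS hx (by decide)).symm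
      (adj_of_mem_VS hy (by decide)).symm (adj 1 0 (by decide)) (adj_of_mem_VS ha (by decide))
      (ha.1 1) ha1 with hax | hay
    · exact Or.inl ⟨adj_of_mem_VS ha (by decide), not_adj_of_mem_VS ha (by decide), ha1, hax⟩
    · exact Or.inr ⟨adj_of_mem_VS ha (by decide), not_adj_of_mem_VS ha (by decide), ha1, hay⟩
  calc (VS G v {0, 2}).ncard
      ≤ _ := Set.ncard_le_ncard hsub (hSx.finite.union hSy.finite)
    _ ≤ _ := Set.ncard_union_le _ _
    _ ≤ 1 + 1 :=
      add_le_add ((Set.ncard_le_one hSx.finite).2 hSx) ((Set.ncard_le_one hSy.finite).2 hSy)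

end VS

theorem stmt_18_general {V : Type*} (G : SimpleGraph V)
    (hG : InducedFree G P2PlusP3) (hGc : InducedFree Gᶜ P2PlusP3)
    (v : ZMod 5 → V)
    (hC : ∀ i j : ZMod 5, G.Adj (v i) (v j) ↔ j = i + 1 ∨ j = i - 1) :
    ∀ i : ZMod 5, 3 ≤ (VS G v {i, i + 2}).ncard →
      ∀ x ∈ VS G v {i - 1, i + 1}, ∀ y ∈ VS G v {i + 1, i + 3}, ¬ G.Adj x y := by
  intro i hA x hx y hy hxy
  have hrot : ∀ a b : ZMod 5, VS G v {i + a, i + b} = VS G (fun k => v (i + k)) {a, b} := by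
    intro a b
    rw [← VS_image_add_left, Set.image_insert_eq, Set.image_singleton]
  nth_rw 1 [← add_zero i] at hA
  rw [sub_eq_add_neg] at hx
  rw [hrot] at hA hx hy
  have hCrot : ∀ a b : ZMod 5, G.Adj (v (i + a)) (v (i + b)) ↔ b = a + 1 ∨ b = a - 1 := by
    intro a b
    rw [hC, add_assoc, add_sub_assoc, add_right_inj, add_right_inj]
  have := ncard_VS_le_two hG hGc hCrot hx hy hxy
  omega

/-- For each `i`, if `V_{i,i+2}` has at least three vertices then
`V_{i-1,i+1}` is anticomplete to `V_{i+1,i+3}`. -/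
theorem stmt_18 {V : Type*} [Fintype V] (G : SimpleGraph V)
    (hG : InducedFree G P2PlusP3) (hGc : InducedFree Gᶜ P2PlusP3)
    (v : ZMod 5 → V) (hv : Function.Injective v)
    (hC : ∀ i j : ZMod 5, G.Adj (v i) (v j) ↔ j = i + 1 ∨ j = i - 1) :
    ∀ i : ZMod 5, 3 ≤ (VS G v {i, i + 2}).ncard →
      ∀ x ∈ VS G v {i - 1, i + 1}, ∀ y ∈ VS G v {i + 1, i + 3}, ¬ G.Adj x y :=
  stmt_18_general G hG hGc v hC
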